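/- Term abstraction preserves equational equality for exportable terms: if M and N are terms of type Export under policy F (i.e., built from key-free terms by substituting capabilities cert(F,j,op) for dishonest users j), then M = N in the equational theory if and only if η₃(M) = η₃(N), where η₃ renames both authentication keys K_MD and K'_M to a single fresh key K?. (Simplified version over a free term algebra: let terms be elements of a free algebra over constants including K_MD, K'_M, K?; define M : Export if every occurrence of K_MD or K'_M in M occurs as the key argument of a subterm mac(⟨j,op⟩,k) with j dishonest and k = cert-key determined by the policy as a function of (j,op); then the key-collapsing substitution η₃ is injective on Export terms.) -/

import Mathlib

/-- Free term algebra with pairing, MACs, variables, user/operation/name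
constants, and the keys K_MD, K'_M, K?. -/
inductive Tm where
  | KMD : Tm
  | KM : Tm
  | Kq : Tm
  | var : ℕ → Tm
  | user : ℕ → Tm
  | opc : ℕ → Tm
  | name : ℕ → Tm
  | pair : Tm → Tm → Tm
  | mac : Tm → Tm → Tm
deriving DecidableEq

/-- A term is key-free if it contains none of K_MD, K'_M, K?. -/
def Tm.keyFree : Tm → Prop
  | .KMD => False
  | .KM => False
  | .Kq => False
  | .pair a b => a.keyFree ∧ b.keyFree
  | .mac a b => a.keyFree ∧ b.keyFree
  | _ => True

/-- Substitution on the free term algebra. -/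
def Tm.subst (σ : ℕ → Tm) : Tm → Tm
  | .var x => σ x
  | .pair a b => .pair (a.subst σ) (b.subst σ)
  | .mac a b => .mac (a.subst σ) (b.subst σ)
  | t => t

/-- The key-collapsing renaming η₃, replacing K_MD and K'_M by K?. -/
def Tm.eta3 : Tm → Tm
  | .KMD => .Kq
  | .KM => .Kq
  | .pair a b => .pair a.eta3 b.eta3
  | .mac a b => .mac a.eta3 b.eta3
  | t => t

/-- A term is Export (w.r.t. a policy F) if it is obtained from a key-free term
by substituting capabilities `mac(⟨j,op⟩, certkey F j op)` for dishonest
users j. -/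
def ExportTm {Policy : Type*} (certkey : Policy → ℕ → ℕ → Tm)
    (dishonest : ℕ → Prop) (F : Policy) (M : Tm) : Prop :=
  ∃ M' : Tm, ∃ σ : ℕ → Tm, M'.keyFree ∧
    (∀ x, ∃ j o, dishonest j ∧
      σ x = Tm.mac (Tm.pair (Tm.user j) (Tm.opc o)) (certkey F j o)) ∧
    M = M'.subst σ

/-! In `η₃ M` the key `K?` only occurs as the key of a capability `mac(⟨j,op⟩, K?)`, and the
policy determines which key stood there before. Restoring those keys is therefore a left inverse
of `η₃` on Export terms, which makes `η₃` injective on them. -/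

namespace Tm

def capKey (ck : ℕ → ℕ → Tm) : Tm → Tm
  | pair (user j) (opc o) => ck j o
  | _ => Kq

def restoreKeys (ck : ℕ → ℕ → Tm) : Tm → Tm
  | pair a b => pair (restoreKeys ck a) (restoreKeys ck b)
  | mac a b => mac (restoreKeys ck a) (if b = Kq then capKey ck a else restoreKeys ck b)
  | t => t

theorem eta3_subst_ne_Kq {σ : ℕ → Tm} (hσ : ∀ x, (σ x).eta3 ≠ Kq) {t : Tm} (ht : t.keyFree) :
    (t.subst σ).eta3 ≠ Kq := by
  cases t <;> simp_all [subst, eta3, keyFree]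

theorem restoreKeys_eta3_subst (ck : ℕ → ℕ → Tm) {σ : ℕ → Tm}
    (hσ : ∀ x, restoreKeys ck (σ x).eta3 = σ x) (hσKq : ∀ x, (σ x).eta3 ≠ Kq) :
    ∀ t : Tm, t.keyFree → restoreKeys ck (t.subst σ).eta3 = t.subst σ
  | var x, _ => hσ x
  | user _, _ | opc _, _ | name _, _ => rfl
  | pair a b, ⟨ha, hb⟩ => by
    simp only [subst, eta3, restoreKeys, restoreKeys_eta3_subst ck hσ hσKq a ha,
      restoreKeys_eta3_subst ck hσ hσKq b hb]
  | mac a b, ⟨ha, hb⟩ => by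
    simp only [subst, eta3, restoreKeys, if_neg (eta3_subst_ne_Kq hσKq hb),
      restoreKeys_eta3_subst ck hσ hσKq a ha, restoreKeys_eta3_subst ck hσ hσKq b hb]

theorem restoreKeys_eta3_capability (ck : ℕ → ℕ → Tm) {j o : ℕ} (hk : (ck j o).eta3 = Kq) :
    restoreKeys ck (mac (pair (user j) (opc o)) (ck j o)).eta3 =
      mac (pair (user j) (opc o)) (ck j o) := by
  simp [eta3, restoreKeys, capKey, hk]

end Tm

theorem ExportTm.restoreKeys_eta3 {Policy : Type*} {certkey : Policy → ℕ → ℕ → Tm}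
    {dishonest : ℕ → Prop} {F : Policy} (hkey : ∀ j o, (certkey F j o).eta3 = Tm.Kq) {M : Tm}
    (hM : ExportTm certkey dishonest F M) : M.eta3.restoreKeys (certkey F) = M := by
  obtain ⟨M', σ, hM', hσ, rfl⟩ := hM
  refine Tm.restoreKeys_eta3_subst _ (fun x => ?_) (fun x => ?_) M' hM'
  all_goals obtain ⟨j, o, -, hx⟩ := hσ x
  · rw [hx, Tm.restoreKeys_eta3_capability _ (hkey j o)]
  · simp [hx, Tm.eta3]

/-- Term abstraction preserves equational equality for exportable terms:
η₃ is injective on Export terms. -/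
theorem eta3_injective_on_export {Policy : Type*}
    (certkey : Policy → ℕ → ℕ → Tm) (dishonest : ℕ → Prop) (F : Policy)
    (hkey : ∀ j o, certkey F j o = Tm.KMD ∨ certkey F j o = Tm.KM)
    (M N : Tm)
    (hM : ExportTm certkey dishonest F M) (hN : ExportTm certkey dishonest F N) :
    M = N ↔ M.eta3 = N.eta3 := by
  have hcertKq : ∀ j o, (certkey F j o).eta3 = Tm.Kq := fun j o => by
    rcases hkey j o with h | h <;> rw [h] <;> rfl
  refine ⟨congrArg Tm.eta3, fun h => ?_⟩
  rw [← hM.restoreKeys_eta3 hcertKq, h, hN.restoreKeys_eta3 hcertKq]
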